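/- Completeness of the counterexample algorithm: if in the interpretation I generated by Generate-model(T) the root element satisfies a*^I ∈ (B*)^I, then T ⊨ C ⊑ D. Equivalently (contrapositive), if T ⊭ C ⊑ D then the algorithm's output is a genuine counterexample with a*^I ∈ C^I and a*^I ∉ (B*)^I. -/

import Mathlib

/-! Basic syntax and semantics of the description logic EL_⊥. -/

/-- EL_⊥ concepts over concept names `C` and role names `R`. -/
inductive ELConcept (C R : Type) : Type
  | top  : ELConcept C R
  | bot  : ELConcept C R
  | atom : C → ELConcept C R
  | conj : ELConcept C R → ELConcept C R → ELConcept C R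
  | ex   : R → ELConcept C R → ELConcept C R

/-- A general concept inclusion (GCI) `C ⊑ D`. -/
abbrev GCI (C R : Type) := ELConcept C R × ELConcept C R

/-- A TBox is a set of GCIs. -/
abbrev TBox (C R : Type) := Set (GCI C R)

/-- ABox assertions: concept assertions `C(a)` and role assertions `r(a,b)`. -/
inductive Assertion (C R Ind : Type) : Type
  | concept : ELConcept C R → Ind → Assertion C R Ind
  | role    : R → Ind → Ind → Assertion C R Ind

/-- An ABox is a set of assertions. -/
abbrev ABox (C R Ind : Type) := Set (Assertion C R Ind)

/-- An interpretation with domain `δ`, interpreting concept names, role names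
and individual names. -/
structure Interp (C R Ind δ : Type) where
  atomI : C → Set δ
  roleI : R → Set (δ × δ)
  indI  : Ind → δ

/-- Semantics of concepts. -/
def Interp.sem {C R Ind δ : Type} (I : Interp C R Ind δ) : ELConcept C R → Set δ
  | .top => Set.univ
  | .bot => ∅
  | .atom A => I.atomI A
  | .conj c d => I.sem c ∩ I.sem d
  | .ex r c => {x | ∃ y, (x, y) ∈ I.roleI r ∧ y ∈ I.sem c}

/-- `I` satisfies a GCI `C ⊑ D` iff `C^I ⊆ D^I`. -/
def Interp.satGCI {C R Ind δ : Type} (I : Interp C R Ind δ) (g : GCI C R) : Prop :=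
  I.sem g.1 ⊆ I.sem g.2

/-- `I` is a model of a TBox. -/
def Interp.modelT {C R Ind δ : Type} (I : Interp C R Ind δ) (T : TBox C R) : Prop :=
  ∀ g ∈ T, I.satGCI g

/-- `I` satisfies an assertion. -/
def Interp.satA {C R Ind δ : Type} (I : Interp C R Ind δ) : Assertion C R Ind → Prop
  | .concept c a => I.indI a ∈ I.sem c
  | .role r a b => (I.indI a, I.indI b) ∈ I.roleI r

/-- `I` is a model of an ABox. -/
def Interp.modelA {C R Ind δ : Type} (I : Interp C R Ind δ) (A : ABox C R Ind) : Prop :=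
  ∀ ax ∈ A, I.satA ax

/-- `I` is a model of the ontology `O = A ∪ T`. -/
def Interp.modelO {C R Ind δ : Type} (I : Interp C R Ind δ) (A : ABox C R Ind)
    (T : TBox C R) : Prop :=
  I.modelA A ∧ I.modelT T

/-- TBox entailment of a GCI: every model of `T` satisfies the GCI. -/
def entailsT {C R : Type} (T : TBox C R) (g : GCI C R) : Prop :=
  ∀ (Ind δ : Type) (I : Interp C R Ind δ), I.modelT T → I.satGCI g

/-- The ontology `A ∪ T` is consistent iff it has a model. -/
def consistentO {C R Ind : Type} (A : ABox C R Ind) (T : TBox C R) : Prop :=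
  ∃ (δ : Type) (I : Interp C R Ind δ), I.modelO A T

/-- Entailment of an assertion from an ontology `A ∪ T`. -/
def entailsO {C R Ind : Type} (A : ABox C R Ind) (T : TBox C R)
    (ax : Assertion C R Ind) : Prop :=
  ∀ (δ : Type) (I : Interp C R Ind δ), I.modelO A T → I.satA ax

/-- Occurrence of a concept name in a concept. -/
def occursName {C R : Type} (B : C) : ELConcept C R → Prop
  | .atom A => A = B
  | .conj c d => occursName B c ∨ occursName B d
  | .ex _ c => occursName B c
  | _ => False

/-- Occurrence of a concept name in a TBox. -/
def occursNameT {C R : Type} (B : C) (T : TBox C R) : Prop :=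
  ∃ g ∈ T, occursName B g.1 ∨ occursName B g.2

/-- A concept is ⊥-free (i.e. an EL concept). -/
def botFree {C R : Type} : ELConcept C R → Prop
  | .bot => False
  | .conj c d => botFree c ∧ botFree d
  | .ex _ c => botFree c
  | _ => True

/-- The top-level conjuncts `At(D)` of a concept `D`: the conjuncts of `D`
if `D` is a conjunction, and `{D}` otherwise. -/
def At {C R : Type} : ELConcept C R → Set (ELConcept C R)
  | .conj c d => At c ∪ At d
  | c => {c}

/-- A concept that is a concept name or `⊤`. -/
def atomicOrTop {C R : Type} (c : ELConcept C R) : Prop :=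
  c = ELConcept.top ∨ ∃ A, c = ELConcept.atom A

/-- A basic concept: a concept name, `⊤`, or `⊥`. -/
def isBasic {C R : Type} (c : ELConcept C R) : Prop :=
  c = ELConcept.top ∨ c = ELConcept.bot ∨ ∃ A, c = ELConcept.atom A

/-- Axioms of a normalized EL_⊥ TBox: `A ⊑ B`, `A₁ ⊓ A₂ ⊑ B`, `∃r.A ⊑ B`,
or `A ⊑ ∃r.B`, with `A, A₁, A₂, B` concept names, `⊤`, or `⊥`. -/
def normalizedAxiom {C R : Type} (g : GCI C R) : Prop :=
  (isBasic g.1 ∧ isBasic g.2) ∨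
  (∃ A1 A2, isBasic A1 ∧ isBasic A2 ∧ g.1 = ELConcept.conj A1 A2 ∧ isBasic g.2) ∨
  (∃ r A, isBasic A ∧ g.1 = ELConcept.ex r A ∧ isBasic g.2) ∨
  (∃ r B, isBasic B ∧ g.2 = ELConcept.ex r B ∧ isBasic g.1)

/-- A normalized TBox. -/
def normalized {C R : Type} (T : TBox C R) : Prop :=
  ∀ g ∈ T, normalizedAxiom g

/-- The left-hand side `L` of a TBox axiom is witnessed at `a` in `A`. -/
def witnessed {C R Ind : Type} (A : ABox C R Ind) (L : ELConcept C R) (a : Ind) : Prop :=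
  Assertion.concept L a ∈ A ∨
  ∃ c d, L = ELConcept.conj c d ∧ Assertion.concept c a ∈ A ∧ Assertion.concept d a ∈ A

/-- An assertion mentions the individual `d`. -/
def Assertion.mentions {C R Ind : Type} (d : Ind) : Assertion C R Ind → Prop
  | .concept _ a => a = d
  | .role _ a b => a = d ∨ b = d

/-- The individual `d` occurs in the ABox `A`. -/
def mentionsA {C R Ind : Type} (d : Ind) (A : ABox C R Ind) : Prop :=
  ∃ ax ∈ A, ax.mentions d

/-- The expansion rules other than the ∃₂-rule: the ⊓-rule, the ∃₁-rule and
the ⊑-rule. -/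
inductive StepCore {C R Ind : Type} (T : TBox C R) : ABox C R Ind → ABox C R Ind → Prop
  | conjRule {A : ABox C R Ind} {D c : ELConcept C R} {a : Ind} :
      Assertion.concept D a ∈ A → c ∈ At D → Assertion.concept c a ∉ A →
      StepCore T A (insert (Assertion.concept c a) A)
  | ex1 {A : ABox C R Ind} {r : R} {a b : Ind} {B : ELConcept C R} :
      Assertion.role r a b ∈ A → Assertion.concept B b ∈ A → atomicOrTop B →
      Assertion.concept (ELConcept.ex r B) a ∉ A →
      StepCore T A (insert (Assertion.concept (ELConcept.ex r B) a) A)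
  | sub {A : ABox C R Ind} {g : GCI C R} {a : Ind} :
      g ∈ T → witnessed A g.1 a → Assertion.concept g.2 a ∉ A →
      StepCore T A (insert (Assertion.concept g.2 a) A)

/-- The ∃₂-rule, parameterized by a guard `good` describing when an existing
individual may be reused as a successor. A fresh individual is introduced
only if no existing individual can be reused. -/
inductive StepEx {C R Ind : Type} (good : ABox C R Ind → Prop) :
    ABox C R Ind → ABox C R Ind → Prop
  | reuse {A : ABox C R Ind} {r : R} {a c : Ind} {E : ELConcept C R} :
      Assertion.concept (ELConcept.ex r E) a ∈ A →
      (¬ ∃ b, Assertion.role r a b ∈ A ∧ Assertion.concept E b ∈ A) →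
      good (insert (Assertion.role r a c) (insert (Assertion.concept E c) A)) →
      StepEx good A (insert (Assertion.role r a c) (insert (Assertion.concept E c) A))
  | fresh {A : ABox C R Ind} {r : R} {a d : Ind} {E : ELConcept C R} :
      Assertion.concept (ELConcept.ex r E) a ∈ A →
      (¬ ∃ b, Assertion.role r a b ∈ A ∧ Assertion.concept E b ∈ A) →
      (¬ ∃ c, good (insert (Assertion.role r a c) (insert (Assertion.concept E c) A))) →
      ¬ mentionsA d A →
      StepEx good A (insert (Assertion.role r a d) (insert (Assertion.concept E d)
        (insert (Assertion.concept ELConcept.top d) A)))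

/-- One application of any expansion rule. -/
def Step {C R Ind : Type} (T : TBox C R) (good : ABox C R Ind → Prop)
    (A A' : ABox C R Ind) : Prop :=
  StepCore T A A' ∨ StepEx good A A'

/-- One application of an expansion rule under the strategy that the ∃₂-rule
is applied only when no other rule is applicable. -/
def StepPr {C R Ind : Type} (T : TBox C R) (good : ABox C R Ind → Prop)
    (A A' : ABox C R Ind) : Prop :=
  StepCore T A A' ∨ ((¬ ∃ B, StepCore T A B) ∧ StepEx good A A')

/-- An ABox is complete if no expansion rule is applicable. -/
def completeA {C R Ind : Type} (T : TBox C R) (good : ABox C R Ind → Prop)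
    (A' : ABox C R Ind) : Prop :=
  ¬ ∃ A'', Step T good A' A''

/-- An ABox is clash-free if it contains no assertion `⊥(a)`. -/
def clashFree {C R Ind : Type} (A' : ABox C R Ind) : Prop :=
  ∀ a, Assertion.concept ELConcept.bot a ∉ A'

/-- The interpretation induced from an ABox: `a^I = a`,
`A^I = {a | A(a) ∈ A'}`, `r^I = {(a,b) | r(a,b) ∈ A'}`. -/
def induced {C R Ind : Type} (A' : ABox C R Ind) : Interp C R Ind Ind where
  atomI := fun B => {a | Assertion.concept (ELConcept.atom B) a ∈ A'}
  roleI := fun r => {p | Assertion.role r p.1 p.2 ∈ A'}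
  indI := id

/-- The guard used by the counterexample algorithm for reusing individuals:
the extended ontology must be consistent and must not entail `B*(a*)`. -/
def ceGuard {C R Ind : Type} (T : TBox C R) (Bstar : C) (astar : Ind)
    (B : ABox C R Ind) : Prop :=
  consistentO B T ∧ ¬ entailsO B T (Assertion.concept (ELConcept.atom Bstar) astar)

/-!
If `T ⊭ C ⊑ D`, a countermodel of `C ⊑ D` becomes a model of `{C(a*)} ∪ T` refuting `B*(a*)`
once `B*` is reinterpreted as `D`. Every expansion rule keeps such a refuting model: the
deterministic rules add consequences of the ABox, a reused successor is allowed only if the guard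
provides one, and a fresh successor can be mapped to a witness of the existential it serves.
Hence `A'` does not entail `B*(a*)`, so `B*(a*) ∉ A'`, while `a*` belongs to `C` in the model
induced by the complete and (being consistent) clash-free ABox `A'`.
-/

variable {C R Ind Ind' δ : Type}

namespace Interp

theorem sem_eq_of_atomI_eq (I : Interp C R Ind δ) (J : Interp C R Ind' δ) {c : ELConcept C R}
    (hA : ∀ B, occursName B c → J.atomI B = I.atomI B) (hR : J.roleI = I.roleI) :
    J.sem c = I.sem c := by
  induction c with
  | top | bot => rfl
  | atom B => exact hA B rfl
  | conj c d ihc ihd =>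
    simp only [sem, ihc fun B h => hA B (Or.inl h), ihd fun B h => hA B (Or.inr h)]
  | ex r c ih => simp only [sem, ih hA, hR]

theorem mem_sem_of_mem_At (I : Interp C R Ind δ) {c e : ELConcept C R} (he : e ∈ At c) {x : δ}
    (hx : x ∈ I.sem c) : x ∈ I.sem e := by
  induction c with
  | conj c d ihc ihd => exact he.elim (ihc · hx.1) (ihd · hx.2)
  | _ => rwa [Set.mem_singleton_iff.mp he]

theorem modelA_insert (I : Interp C R Ind δ) {ax : Assertion C R Ind} {A : ABox C R Ind} :
    I.modelA (insert ax A) ↔ I.satA ax ∧ I.modelA A :=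
  Set.forall_mem_insert

theorem sem_mk_atomI_roleI (I : Interp C R Ind δ) (f : Ind' → δ) (c : ELConcept C R) :
    (⟨I.atomI, I.roleI, f⟩ : Interp C R Ind' δ).sem c = I.sem c :=
  sem_eq_of_atomI_eq I _ (fun _ _ => rfl) rfl

theorem satA_update_indI [DecidableEq Ind] (I : Interp C R Ind δ) {d : Ind} (e : δ)
    {ax : Assertion C R Ind} (hd : ¬ ax.mentions d) :
    (⟨I.atomI, I.roleI, Function.update I.indI d e⟩ : Interp C R Ind δ).satA ax ↔
      I.satA ax := by
  cases ax with
  | concept c a =>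
    have ha : a ≠ d := hd
    simp only [satA, Function.update_of_ne ha, sem_mk_atomI_roleI]
  | role r a b =>
    obtain ⟨ha, hb⟩ : a ≠ d ∧ b ≠ d := not_or.mp hd
    simp only [satA, Function.update_of_ne ha, Function.update_of_ne hb]

theorem mem_sem_of_witnessed (I : Interp C R Ind δ) {A : ABox C R Ind} {L : ELConcept C R}
    {a : Ind} (hw : witnessed A L a) (hA : I.modelA A) : I.indI a ∈ I.sem L := by
  rcases hw with hL | ⟨c, d, rfl, hc, hd⟩
  · exact hA _ hL
  · exact ⟨hA _ hc, hA _ hd⟩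

theorem clashFree_of_modelA (I : Interp C R Ind δ) {A : ABox C R Ind} (hA : I.modelA A) :
    clashFree A :=
  fun _ ha => hA _ ha

end Interp

theorem not_entailsO_iff {A : ABox C R Ind} {T : TBox C R} {ax : Assertion C R Ind} :
    ¬ entailsO A T ax ↔
      ∃ (δ : Type) (I : Interp C R Ind δ), I.modelO A T ∧ ¬ I.satA ax := by
  simp only [entailsO, not_forall, exists_prop]

theorem entailsO_of_mem {A : ABox C R Ind} {T : TBox C R} {ax : Assertion C R Ind}
    (h : ax ∈ A) : entailsO A T ax :=
  fun _ _ hI => hI.1 ax h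

theorem exists_not_mentionsA [Infinite Ind] {A : ABox C R Ind} (hA : A.Finite) :
    ∃ d, ¬ mentionsA d A := by
  have hfin : ∀ ax : Assertion C R Ind, {d | ax.mentions d}.Finite := by
    rintro (⟨c, a⟩ | ⟨r, a, b⟩)
    · exact (Set.finite_singleton a).subset fun d hd => hd.symm
    · exact ((Set.finite_singleton a).union (Set.finite_singleton b)).subset
        fun d hd => hd.imp Eq.symm Eq.symm
  have hmentioned : {d | mentionsA d A}.Finite :=
    (hA.biUnion fun ax _ => hfin ax).subset fun d ⟨ax, hax, hd⟩ => Set.mem_biUnion hax hd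
  exact hmentioned.exists_notMem

section Rules

variable {T : TBox C R} {good : ABox C R Ind → Prop} {A A' : ABox C R Ind}

theorem Step.subset (h : Step T good A A') : A ⊆ A' := by
  rcases h with h | h <;> cases h <;> intro ax hax <;> simp [hax]

theorem StepCore.modelA {I : Interp C R Ind δ} (h : StepCore T A A') (hI : I.modelO A T) :
    I.modelA A' := by
  cases h with
  | conjRule hD hAt _ => exact I.modelA_insert.mpr ⟨I.mem_sem_of_mem_At hAt (hI.1 _ hD), hI.1⟩
  | ex1 hr hB _ _ => exact I.modelA_insert.mpr ⟨⟨_, hI.1 _ hr, hI.1 _ hB⟩, hI.1⟩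
  | sub hg hw _ =>
    exact I.modelA_insert.mpr ⟨hI.2 _ hg (I.mem_sem_of_witnessed hw hI.1), hI.1⟩

theorem StepEx.modelO_fresh {I : Interp C R Ind δ} {r : R} {a d : Ind} {E : ELConcept C R}
    (hE : Assertion.concept (ELConcept.ex r E) a ∈ A) (hd : ¬ mentionsA d A)
    (hI : I.modelO A T) :
    ∃ J : Interp C R Ind δ,
      (∀ ax : Assertion C R Ind, ¬ ax.mentions d → (J.satA ax ↔ I.satA ax)) ∧
      J.modelO (insert (Assertion.role r a d) (insert (Assertion.concept E d)
        (insert (Assertion.concept ELConcept.top d) A))) T := by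
  classical
  obtain ⟨e, hae, he⟩ := hI.1 _ hE
  have had : a ≠ d := fun h => hd ⟨_, hE, h⟩
  refine ⟨⟨I.atomI, I.roleI, Function.update I.indI d e⟩, fun _ => I.satA_update_indI e,
    ?_, ?_⟩
  · simp only [Interp.modelA_insert]
    refine ⟨?_, ?_, Set.mem_univ _, fun ax hax =>
      (I.satA_update_indI e fun h => hd ⟨ax, hax, h⟩).mpr (hI.1 ax hax)⟩
    · simpa only [Interp.satA, Function.update_of_ne had, Function.update_self] using hae
    · simpa only [Interp.satA, Function.update_self, Interp.sem_mk_atomI_roleI] using he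
  · intro g hg
    simpa only [Interp.satGCI, Interp.sem_mk_atomI_roleI] using hI.2 g hg

theorem Step.not_entailsO {ax : Assertion C R Ind}
    (hgood : ∀ B, good B → ¬ entailsO B T ax) (hax : ∀ d, ax.mentions d → mentionsA d A)
    (hstep : Step T good A A') (h : ¬ entailsO A T ax) : ¬ entailsO A' T ax := by
  obtain ⟨δ, I, hI, hnot⟩ := not_entailsO_iff.mp h
  rcases hstep with hcore | hex
  · exact not_entailsO_iff.mpr ⟨δ, I, ⟨hcore.modelA hI, hI.2⟩, hnot⟩
  cases hex with
  | reuse _ _ hg => exact hgood _ hg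
  | fresh hE _ _ hd =>
    obtain ⟨J, hJ, hJmodel⟩ := StepEx.modelO_fresh hE hd hI
    have hdax : ¬ ax.mentions _ := fun h => hd (hax _ h)
    exact not_entailsO_iff.mpr ⟨δ, J, hJmodel, (hJ ax hdax).not.mpr hnot⟩

theorem subset_of_reflTransGen (h : Relation.ReflTransGen (Step T good) A A') : A ⊆ A' := by
  induction h with
  | refl => exact subset_rfl
  | tail _ hstep ih => exact ih.trans hstep.subset

theorem not_entailsO_of_reflTransGen {ax : Assertion C R Ind}
    (h : Relation.ReflTransGen (Step T good) A A') (hgood : ∀ B, good B → ¬ entailsO B T ax)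
    (hax : ∀ d, ax.mentions d → mentionsA d A) (hA : ¬ entailsO A T ax) :
    ¬ entailsO A' T ax := by
  induction h with
  | refl => exact hA
  | tail hreach hstep ih =>
    refine hstep.not_entailsO hgood (fun d hd => ?_) ih
    obtain ⟨ax', hax', hd'⟩ := hax d hd
    exact ⟨ax', subset_of_reflTransGen hreach hax', hd'⟩

namespace completeA

theorem mem_of_mem_At (hcomp : completeA T good A) {D e : ELConcept C R} {a : Ind}
    (hD : Assertion.concept D a ∈ A) (he : e ∈ At D) : Assertion.concept e a ∈ A := by
  by_contra hno
  exact hcomp ⟨_, Or.inl (.conjRule hD he hno)⟩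

theorem exists_role_of_mem_ex [Infinite Ind] (hfin : A.Finite) (hcomp : completeA T good A)
    {r : R} {E : ELConcept C R} {a : Ind} (hE : Assertion.concept (ELConcept.ex r E) a ∈ A) :
    ∃ b, Assertion.role r a b ∈ A ∧ Assertion.concept E b ∈ A := by
  by_contra hno
  by_cases hreuse : ∃ c, good (insert (Assertion.role r a c) (insert (Assertion.concept E c) A))
  · obtain ⟨c, hc⟩ := hreuse
    exact hcomp ⟨_, Or.inr (.reuse hE hno hc)⟩
  · obtain ⟨d, hd⟩ := exists_not_mentionsA hfin
    exact hcomp ⟨_, Or.inr (.fresh hE hno hreuse hd)⟩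

/-- Stated for all top-level conjuncts of `E` at once, so that a structural induction on `E`
covers the ⊓-case. -/
theorem mem_sem_induced_of_forall_At [Infinite Ind] (hfin : A.Finite)
    (hcomp : completeA T good A) (hcf : clashFree A) (E : ELConcept C R) {a : Ind}
    (h : ∀ e ∈ At E, Assertion.concept e a ∈ A) : a ∈ (induced A).sem E := by
  induction E generalizing a with
  | top => trivial
  | bot => exact hcf a (h _ rfl)
  | atom B => exact h _ rfl
  | conj c d ihc ihd => exact ⟨ihc fun e he => h e (Or.inl he), ihd fun e he => h e (Or.inr he)⟩
  | ex r c ih =>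
    obtain ⟨b, hab, hb⟩ := hcomp.exists_role_of_mem_ex hfin (h _ rfl)
    exact ⟨b, hab, ih fun e he => hcomp.mem_of_mem_At hb he⟩

theorem mem_sem_induced [Infinite Ind] (hfin : A.Finite) (hcomp : completeA T good A)
    (hcf : clashFree A) {E : ELConcept C R} {a : Ind} (hE : Assertion.concept E a ∈ A) :
    a ∈ (induced A).sem E :=
  hcomp.mem_sem_induced_of_forall_At hfin hcf E fun _ he => hcomp.mem_of_mem_At hE he

end completeA

end Rules

theorem not_entailsO_of_not_entailsT {T : TBox C R} {Cc D : ELConcept C R} {Bstar : C}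
    (astar : Ind) (hfreshC : ¬ occursName Bstar Cc) (hfreshD : ¬ occursName Bstar D)
    (hfreshT : ∀ g ∈ T, g = (D, ELConcept.atom Bstar) ∨
      (¬ occursName Bstar g.1 ∧ ¬ occursName Bstar g.2))
    (hnent : ¬ entailsT T (Cc, D)) :
    ¬ entailsO {Assertion.concept Cc astar} T
      (Assertion.concept (ELConcept.atom Bstar) astar) := by
  classical
  simp only [entailsT, not_forall] at hnent
  obtain ⟨Ind', δ, I, hIT, hCD⟩ := hnent
  obtain ⟨x, hxC, hxD⟩ := Set.not_subset.mp hCD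
  let J : Interp C R Ind δ := ⟨Function.update I.atomI Bstar (I.sem D), I.roleI, fun _ => x⟩
  have hJ : ∀ c, ¬ occursName Bstar c → J.sem c = I.sem c := fun c hc =>
    Interp.sem_eq_of_atomI_eq I J
      (fun B hB => Function.update_of_ne (fun h : B = Bstar => hc (h ▸ hB)) _ _) rfl
  have hJB : J.sem (ELConcept.atom Bstar) = I.sem D :=
    Function.update_self Bstar _ I.atomI
  refine not_entailsO_iff.mpr ⟨δ, J, ⟨?_, fun g hg => ?_⟩, ?_⟩
  · rintro _ rfl
    simpa only [Interp.satA, hJ Cc hfreshC] using hxC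
  · rcases hfreshT g hg with rfl | ⟨h1, h2⟩
    · simp only [Interp.satGCI, hJB, hJ D hfreshD, subset_rfl]
    · simpa only [Interp.satGCI, hJ _ h1, hJ _ h2] using hIT g hg
  · simpa only [Interp.satA, hJB] using hxD

theorem stmt14_general {C R Ind : Type} [Infinite Ind] (T : TBox C R)
    (Cc D : ELConcept C R) (Bstar : C) (astar : Ind) (A' : ABox C R Ind)
    (hfreshC : ¬ occursName Bstar Cc) (hfreshD : ¬ occursName Bstar D)
    (hfreshT : ∀ g ∈ T, g = (D, ELConcept.atom Bstar) ∨
      (¬ occursName Bstar g.1 ∧ ¬ occursName Bstar g.2))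
    (hfin : A'.Finite)
    (hreach : Relation.ReflTransGen (Step T (ceGuard T Bstar astar))
      {Assertion.concept Cc astar} A')
    (hcomp : completeA T (ceGuard T Bstar astar) A') :
    ((induced A').indI astar ∈ (induced A').sem (ELConcept.atom Bstar) →
      entailsT T (Cc, D)) ∧
    (¬ entailsT T (Cc, D) →
      (induced A').indI astar ∈ (induced A').sem Cc ∧
      (induced A').indI astar ∉ (induced A').sem (ELConcept.atom Bstar)) := by
  have hrefuted : ¬ entailsT T (Cc, D) →
      ¬ entailsO A' T (Assertion.concept (ELConcept.atom Bstar) astar) := fun hnent =>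
    not_entailsO_of_reflTransGen hreach (fun _ hguard => hguard.2)
      (fun _ hd => ⟨_, Set.mem_singleton _, hd⟩)
      (not_entailsO_of_not_entailsT astar hfreshC hfreshD hfreshT hnent)
  refine ⟨fun hB => by_contra fun hnent => hrefuted hnent (entailsO_of_mem hB), fun hnent => ?_⟩
  obtain ⟨δ, I, hI, -⟩ := not_entailsO_iff.mp (hrefuted hnent)
  have hC : Assertion.concept Cc astar ∈ A' := subset_of_reflTransGen hreach rfl
  exact ⟨hcomp.mem_sem_induced hfin (I.clashFree_of_modelA hI.1) hC,
    fun hB => hrefuted hnent (entailsO_of_mem hB)⟩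

/-- Completeness of the counterexample algorithm: if in the
generated interpretation `a*^I ∈ (B*)^I`, then `T ⊨ C ⊑ D`; contrapositively,
if `T ⊭ C ⊑ D` then the output is a genuine counterexample with
`a*^I ∈ C^I` and `a*^I ∉ (B*)^I`. -/
theorem stmt14 {C R Ind : Type} [Infinite Ind] (T : TBox C R)
    (Cc D : ELConcept C R) (Bstar : C) (astar : Ind) (A' : ABox C R Ind)
    (hnorm : ∀ g ∈ T, normalizedAxiom g ∨ g = (D, ELConcept.atom Bstar))
    (hmem : (D, ELConcept.atom Bstar) ∈ T)
    (hfreshC : ¬ occursName Bstar Cc) (hfreshD : ¬ occursName Bstar D)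
    (hfreshT : ∀ g ∈ T, g = (D, ELConcept.atom Bstar) ∨
      (¬ occursName Bstar g.1 ∧ ¬ occursName Bstar g.2))
    (hfin : A'.Finite)
    (hreach : Relation.ReflTransGen (Step T (ceGuard T Bstar astar))
      {Assertion.concept Cc astar} A')
    (hcomp : completeA T (ceGuard T Bstar astar) A') :
    ((induced A').indI astar ∈ (induced A').sem (ELConcept.atom Bstar) →
      entailsT T (Cc, D)) ∧
    (¬ entailsT T (Cc, D) →
      (induced A').indI astar ∈ (induced A').sem Cc ∧
      (induced A').indI astar ∉ (induced A').sem (ELConcept.atom Bstar)) :=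
  stmt14_general T Cc D Bstar astar A' hfreshC hfreshD hfreshT hfin hreach hcomp
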